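/- arXiv:1007.2230 — 7 statements merged into one kernel-verified Lean document; each statement's English description precedes it below -/
import Mathlib

section
/- The ℂ[x,x⁻¹]-algebra endomorphism ψ of S[y,z,u] (S = ℂ[x,x⁻¹]) given by ψ(y) = y, ψ(z) = v/x, ψ(u) = w/x², where p = yu+z², v = xz+yp, w = x²u−2xzp−yp², is an S-algebra automorphism. -/
/-!
ψ is the Nagata automorphism `nagata t` at `t = x⁻¹`: it fixes `y` and `p = yu + z²`, sends
`z ↦ z + t y p` and `u ↦ u - 2 t z p - t² y p²`. Because `p` is fixed, `t ↦ nagata t` is a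
homomorphism from `(S, +)` to the endomorphisms (the exponential of the locally nilpotent
derivation `y p ∂_z - 2 z p ∂_u`), so `nagata (-t)` inverts `nagata t`.
-/

open MvPolynomial LaurentPolynomial

namespace MvPolynomial

variable {R : Type*} [CommRing R]

/-- The polynomial `y u + z²` in the variables `y = X 0`, `z = X 1`, `u = X 2`. -/
noncomputable def nagataQuadric : MvPolynomial (Fin 3) R := X 0 * X 2 + X 1 ^ 2

noncomputable def nagata (t : R) : MvPolynomial (Fin 3) R →ₐ[R] MvPolynomial (Fin 3) R :=
  aeval ![X 0, X 1 + C t * X 0 * nagataQuadric,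
    X 2 - 2 * C t * X 1 * nagataQuadric - C t ^ 2 * X 0 * nagataQuadric ^ 2]

@[simp]
theorem nagata_X_zero (t : R) : nagata t (X 0) = X 0 := by
  simp [nagata]

@[simp]
theorem nagata_X_one (t : R) :
    nagata t (X 1) = X 1 + C t * X 0 * nagataQuadric := by
  simp [nagata]

@[simp]
theorem nagata_X_two (t : R) :
    nagata t (X 2) = X 2 - 2 * C t * X 1 * nagataQuadric - C t ^ 2 * X 0 * nagataQuadric ^ 2 := by
  simp [nagata]

@[simp]
theorem nagata_nagataQuadric (t : R) : nagata t nagataQuadric = nagataQuadric := by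
  simp only [nagataQuadric, map_add, map_mul, map_pow, nagata_X_zero, nagata_X_one,
    nagata_X_two]
  ring

theorem nagata_comp_nagata (s t : R) : (nagata s).comp (nagata t) = nagata (s + t) := by
  refine algHom_ext fun i => ?_
  fin_cases i <;> simp [C_add, map_ofNat] <;> ring

theorem nagata_zero : nagata (0 : R) = AlgHom.id R _ := by
  refine algHom_ext fun i => ?_
  fin_cases i <;> simp

noncomputable def nagataEquiv (t : R) : MvPolynomial (Fin 3) R ≃ₐ[R] MvPolynomial (Fin 3) R :=
  AlgEquiv.ofAlgHom (nagata t) (nagata (-t))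
    (by rw [nagata_comp_nagata, add_neg_cancel, nagata_zero])
    (by rw [nagata_comp_nagata, neg_add_cancel, nagata_zero])

/-- `nagata t` written with `t = a⁻¹` cleared out of the numerators, as in the definition of ψ. -/
theorem aeval_eq_nagata {a t : R} (hat : a * t = 1) :
    aeval ![X 0, C t * (C a * X 1 + X 0 * nagataQuadric),
      C t ^ 2 * (C a ^ 2 * X 2 - 2 * C a * X 1 * nagataQuadric - X 0 * nagataQuadric ^ 2)] =
      nagata t := by
  have hC : (C a : MvPolynomial (Fin 3) R) * C t = 1 := by rw [← C_mul, hat, C_1]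
  refine algHom_ext fun i => ?_
  fin_cases i <;> simp
  · linear_combination (X 1 : MvPolynomial (Fin 3) R) * hC
  · linear_combination (C a * C t + 1) * (X 2 : MvPolynomial (Fin 3) R) * hC
      - 2 * C t * X 1 * nagataQuadric * hC

end MvPolynomial

/-- In S[y,z,u] with S = ℂ[x,x⁻¹] (Laurent polynomials, x = T 1), the S-algebra
endomorphism ψ with ψ(y)=y, ψ(z)=v/x, ψ(u)=w/x², where p = yu+z², v = xz+yp,
w = x²u−2xzp−yp², is an automorphism, i.e. bijective. -/
theorem stmt3 :
    let S := LaurentPolynomial ℂ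
    let y : MvPolynomial (Fin 3) S := X 0
    let z : MvPolynomial (Fin 3) S := X 1
    let u : MvPolynomial (Fin 3) S := X 2
    let x : MvPolynomial (Fin 3) S := C (T 1)
    let p := y * u + z ^ 2
    let v := x * z + y * p
    let w := x ^ 2 * u - 2 * x * z * p - y * p ^ 2
    let ψ : MvPolynomial (Fin 3) S →ₐ[S] MvPolynomial (Fin 3) S :=
      aeval ![y, MvPolynomial.C (T (-1)) * v, MvPolynomial.C (T (-2)) * w]
    Function.Bijective ψ := by
  intro S y z u x p v w ψ
  have hT : (T 1 : S) * T (-1) = 1 := by rw [← T_add, add_neg_cancel, T_zero]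
  have hT2 : (T (-2) : S) = T (-1) ^ 2 := by rw [T_pow]; norm_num
  have hψ : ψ = nagata (T (-1)) := by
    rw [← aeval_eq_nagata hT, ← C_pow, ← hT2]
    rfl
  rw [hψ]
  exact (nagataEquiv (T (-1))).bijective
end

section
/- For every n ≥ 3, the Vénéreau polynomial f_n = y + xⁿ(xz + y(yu+z²)) is a ℂ[x]-coordinate of ℂ[x][y,z,u]: there exist g, h ∈ ℂ[x][y,z,u] with ℂ[x][f_n, g, h] = ℂ[x][y,z,u]. -/
/-!
Vénéreau's construction. Write `v = yu + z²`, `s = xz + yv` (so `f = y + x^(m+3) s`) and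
`t = x²u − 2sv + yv²`. There are explicit `g`, `h` with
`fh + g² = E := v + x^(m+1) s t`, and then `s = xg + fE` and `t = x²h − 2sE + fE²`. Hence any subring
containing `x, f, g, h` contains `E`, `s`, `t`, and unwinding the definitions it contains
`y = f − x^(m+3) s`, `v = E − x^(m+1) s t`, then `z` and `u`.
-/

namespace Venereau

variable {A : Type*} [CommRing A] (x y z u : A) (m : ℕ)

def v : A := y * u + z ^ 2

def s : A := x * z + y * v y z u

def t : A := x ^ 2 * u - 2 * s x y z u * v y z u + y * v y z u ^ 2

def f : A := y + x ^ (m + 3) * s x y z u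

def E : A := v y z u + x ^ (m + 1) * s x y z u * t x y z u

def g : A := z - x ^ (m + 2) * s x y z u * v y z u - x ^ m * f x y z u m * s x y z u * t x y z u

def h : A :=
  u - x ^ (m + 1) * s x y z u * v y z u ^ 2 + 2 * x ^ m * s x y z u * t x y z u * z
    - 2 * x ^ (2 * m + 2) * s x y z u ^ 2 * t x y z u * v y z u
    - x ^ (2 * m) * f x y z u m * s x y z u ^ 2 * t x y z u ^ 2

theorem f_mul_h_add_g_sq :
    f x y z u m * h x y z u m + g x y z u m ^ 2 = E x y z u m := by
  simp only [f, g, h, E, t, s, v]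
  ring

theorem s_eq_x_mul_g_add_f_mul_E :
    s x y z u = x * g x y z u m + f x y z u m * E x y z u m := by
  simp only [f, g, E, t, s, v]
  ring

theorem t_eq_x_sq_mul_h_sub :
    t x y z u = x ^ 2 * h x y z u m - 2 * s x y z u * E x y z u m
      + f x y z u m * E x y z u m ^ 2 := by
  simp only [f, h, E, t, s, v]
  ring

attribute [local aesop safe apply] add_mem sub_mem mul_mem pow_mem ofNat_mem

theorem y_z_u_mem_of_x_f_g_h_mem {σ : Type*} [SetLike σ A] [SubringClass σ A] {S : σ}
    (hx : x ∈ S) (hf : f x y z u m ∈ S) (hg : g x y z u m ∈ S) (hh : h x y z u m ∈ S) :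
    y ∈ S ∧ z ∈ S ∧ u ∈ S := by
  have hE : E x y z u m ∈ S := by rw [← f_mul_h_add_g_sq]; aesop
  have hs : s x y z u ∈ S := by rw [s_eq_x_mul_g_add_f_mul_E x y z u m]; aesop
  have ht : t x y z u ∈ S := by rw [t_eq_x_sq_mul_h_sub x y z u m]; aesop
  have hy : y ∈ S := by
    rw [show y = f x y z u m - x ^ (m + 3) * s x y z u by simp only [f]; ring]; aesop
  have hv : v y z u ∈ S := by
    rw [show v y z u = E x y z u m - x ^ (m + 1) * s x y z u * t x y z u by
      simp only [E]; ring]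
    aesop
  have hz : z ∈ S := by
    rw [show z = g x y z u m + x ^ (m + 2) * s x y z u * v y z u
        + x ^ m * f x y z u m * s x y z u * t x y z u by simp only [g]; ring]
    aesop
  refine ⟨hy, hz, ?_⟩
  rw [show u = h x y z u m + x ^ (m + 1) * s x y z u * v y z u ^ 2
      - 2 * x ^ m * s x y z u * t x y z u * z
      + 2 * x ^ (2 * m + 2) * s x y z u ^ 2 * t x y z u * v y z u
      + x ^ (2 * m) * f x y z u m * s x y z u ^ 2 * t x y z u ^ 2 by simp only [h]; ring]
  aesop

end Venereau

open MvPolynomial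

/-- For n ≥ 3, fₙ = y + xⁿ(xz + y(yu+z²)) is a ℂ[x]-coordinate of
ℂ[x][y,z,u] ≅ ℂ[x,y,z,u]: there exist g, h with ℂ[x, fₙ, g, h] = ℂ[x,y,z,u]. -/
theorem stmt5 :
    let x : MvPolynomial (Fin 4) ℂ := X 0
    let y : MvPolynomial (Fin 4) ℂ := X 1
    let z : MvPolynomial (Fin 4) ℂ := X 2
    let u : MvPolynomial (Fin 4) ℂ := X 3
    ∀ n : ℕ, 3 ≤ n →
      ∃ g h : MvPolynomial (Fin 4) ℂ,
        Algebra.adjoin ℂ ({x, y + x ^ n * (x * z + y * (y * u + z ^ 2)), g, h} :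
          Set (MvPolynomial (Fin 4) ℂ)) = ⊤ := by
  intro x y z u n hn
  obtain ⟨m, rfl⟩ := Nat.exists_eq_add_of_le' hn
  refine ⟨Venereau.g x y z u m, Venereau.h x y z u m, ?_⟩
  set S := Algebra.adjoin ℂ
    {x, Venereau.f x y z u m, Venereau.g x y z u m, Venereau.h x y z u m}
  have hx : x ∈ S := Algebra.subset_adjoin (by simp)
  obtain ⟨hy, hz, hu⟩ := Venereau.y_z_u_mem_of_x_f_g_h_mem x y z u m hx
    (Algebra.subset_adjoin (by simp)) (Algebra.subset_adjoin (by simp))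
    (Algebra.subset_adjoin (by simp))
  rw [eq_top_iff, ← adjoin_range_X, Algebra.adjoin_le_iff]
  rintro _ ⟨i, rfl⟩
  fin_cases i <;> assumption
end

section
/- Every Vénéreau polynomial f_n = y + xⁿ(xz + y(yu+z²)), n ≥ 1, is a coordinate of S[y,z,u] where S = ℂ[x,x⁻¹]. -/
open MvPolynomial LaurentPolynomial

/-!
Put `v = y u + z²`, `g = x z + y v` and `h = x² u - 2 x z v - y v²`. Then `g² + y h = x² v`, so
once `y = f - xⁿ g` is recovered, the invertibility of `x` gives successively `v`, `z = (g - y v)/x`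
and `u = (h + 2 x z v + y v²)/x²`.
-/

namespace Venereau

variable {R A : Type*} [CommRing R] [CommRing A] [Algebra R A]

theorem _root_.Subalgebra.mem_of_isUnit_of_algebraMap_mul_mem (M : Subalgebra R A) {c : R}
    (hc : IsUnit c) {a : A} (ha : algebraMap R A c * a ∈ M) : a ∈ M := by
  rw [← Algebra.smul_def] at ha
  exact (Submodule.smul_mem_iff_of_isUnit (Subalgebra.toSubmodule M) hc).mp ha

def venereauG (x y z u : A) : A := x * z + y * (y * u + z ^ 2)

def venereauH (x y z u : A) : A :=
  x ^ 2 * u - 2 * x * z * (y * u + z ^ 2) - y * (y * u + z ^ 2) ^ 2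

theorem venereauG_sq_add_mul_venereauH (x y z u : A) :
    venereauG x y z u ^ 2 + y * venereauH x y z u = x * (x * (y * u + z ^ 2)) := by
  unfold venereauG venereauH; ring

theorem adjoin_le_adjoin_venereau {c : R} (hc : IsUnit c) (a : R) (y z u : A) :
    Algebra.adjoin R {y, z, u} ≤
      Algebra.adjoin R {y + algebraMap R A a * venereauG (algebraMap R A c) y z u,
        venereauG (algebraMap R A c) y z u, venereauH (algebraMap R A c) y z u} := by
  set x := algebraMap R A c
  set g := venereauG x y z u with hg
  set h := venereauH x y z u with hh
  set M := Algebra.adjoin R {y + algebraMap R A a * g, g, h}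
  have hf : y + algebraMap R A a * g ∈ M := Algebra.subset_adjoin (by simp)
  have hgM : g ∈ M := Algebra.subset_adjoin (by simp)
  have hhM : h ∈ M := Algebra.subset_adjoin (by simp)
  have hdiv : ∀ b, x * b ∈ M → b ∈ M := fun b => M.mem_of_isUnit_of_algebraMap_mul_mem hc
  have hy : y ∈ M := by
    rw [show y = (y + algebraMap R A a * g) - algebraMap R A a * g by ring]
    exact sub_mem hf (mul_mem (M.algebraMap_mem a) hgM)
  have hv : y * u + z ^ 2 ∈ M := by
    refine hdiv _ (hdiv _ ?_)
    rw [← venereauG_sq_add_mul_venereauH]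
    exact add_mem (pow_mem hgM 2) (mul_mem hy hhM)
  have hz : z ∈ M := by
    refine hdiv _ ?_
    rw [show x * z = g - y * (y * u + z ^ 2) by rw [hg, venereauG]; ring]
    exact sub_mem hgM (mul_mem hy hv)
  have hu : u ∈ M := by
    refine hdiv _ (hdiv _ ?_)
    rw [show x * (x * u) = h + algebraMap R A (2 * c) * z * (y * u + z ^ 2)
        + y * (y * u + z ^ 2) ^ 2 by rw [hh, venereauH, map_mul, map_ofNat]; ring]
    exact add_mem (add_mem hhM (mul_mem (mul_mem (M.algebraMap_mem _) hz) hv))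
      (mul_mem hy (pow_mem hv 2))
  exact Algebra.adjoin_le (by simp [Set.insert_subset_iff, hy, hz, hu])

theorem adjoin_X_fin_three :
    Algebra.adjoin R ({X 0, X 1, X 2} : Set (MvPolynomial (Fin 3) R)) = ⊤ := by
  rw [← adjoin_range_X]
  congr 1
  ext p
  simp [Fin.exists_fin_succ, eq_comm]

end Venereau

/-- For every n ≥ 1, the Vénéreau polynomial fₙ = y + xⁿ(xz + y(yu+z²)) is an
S-coordinate of S[y,z,u], where S = ℂ[x,x⁻¹] (x = T 1). -/
theorem stmt7 :
    let S := LaurentPolynomial ℂ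
    let y : MvPolynomial (Fin 3) S := X 0
    let z : MvPolynomial (Fin 3) S := X 1
    let u : MvPolynomial (Fin 3) S := X 2
    let x : MvPolynomial (Fin 3) S := C (T 1)
    ∀ n : ℕ, 1 ≤ n →
      ∃ g h : MvPolynomial (Fin 3) S,
        Algebra.adjoin S ({y + x ^ n * (x * z + y * (y * u + z ^ 2)), g, h} :
          Set (MvPolynomial (Fin 3) S)) = ⊤ := by
  intro S y z u x n _
  refine ⟨Venereau.venereauG x y z u, Venereau.venereauH x y z u, top_unique ?_⟩
  have hxn : x ^ n = algebraMap S _ (T 1 ^ n) := by rw [algebraMap_eq, map_pow]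
  rw [← Venereau.adjoin_X_fin_three, hxn]
  exact Venereau.adjoin_le_adjoin_venereau (isUnit_T 1) _ y z u
end

section
/- In ℂ[x][y,z,u] with p = yu+z², v = xz+yp, w = x²u−2xzp−yp², the intersection of ℂ[y,v,w] with the ideal (x)·ℂ[x][y,z,u] equals the intersection of ℂ[y,v,w] with (x²)·ℂ[x][y,z,u], and both equal the ideal (yw+v²)·ℂ[y,v,w]. -/
/-!
The identity `y * w + v ^ 2 = x ^ 2 * p` puts every multiple of `y * w + v ^ 2` into `(x ^ 2)`.
Conversely, write `f ∈ ℂ[y, v, w]` as `F(y, v, w)` and reduce `F` modulo `a * c + b ^ 2` to a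
remainder in which no monomial is divisible by `a * c`. Setting `x = z = 0` sends `y, v, w` to
`y, y ^ 2 * u, -y ^ 3 * u ^ 2`, and distinct reduced monomials `a ^ i * b ^ j * c ^ k` go to
distinct monomials `y ^ (i + 2j + 3k) * u ^ (j + 2k)`. So if `f ∈ (x)`, the remainder vanishes.
-/

open MvPolynomial

noncomputable section

variable {R : Type*} [CommRing R]

namespace YVW

variable (R) in
def relation : MvPolynomial (Fin 3) R := X 0 * X 2 + X 1 ^ 2

def reducedExponents : Set (Fin 3 →₀ ℕ) := {d | d 0 = 0 ∨ d 2 = 0}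

theorem exists_relation_mul_add_monomial (n : ℕ) (d : Fin 3 →₀ ℕ) (hd : d 0 ≤ n) (c : R) :
    ∃ G, ∃ r ∈ restrictSupport R reducedExponents, monomial d c = relation R * G + r := by
  induction n generalizing d c with
  | zero =>
    refine ⟨0, monomial d c, ?_, by ring⟩
    simp only [reducedExponents, monomial_mem_restrictSupport, Set.mem_ofPred_eq]
    omega
  | succ n ih =>
    by_cases hred : d ∈ reducedExponents
    · exact ⟨0, monomial d c, by simp [hred], by ring⟩
    obtain ⟨h0, h2⟩ : d 0 ≠ 0 ∧ d 2 ≠ 0 := by simpa [reducedExponents, not_or] using hred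
    set e := d - Finsupp.single 0 1 - Finsupp.single 2 1
    have hde : d = e + Finsupp.single 0 1 + Finsupp.single 2 1 := by
      ext i; fin_cases i <;> simp [e] <;> omega
    -- `X 0 * X 2 ≡ -X 1 ^ 2` lowers the exponent of `X 0`
    have hstep : monomial d c =
        relation R * monomial e c + monomial (e + Finsupp.single 1 2) (-c) := by
      calc monomial d c = X 0 * X 2 * monomial e c := by
            rw [hde, X, X, monomial_mul, monomial_mul, one_mul, one_mul, add_comm _ e, add_assoc]
        _ = relation R * monomial e c - X 1 ^ 2 * monomial e c := by rw [relation]; ring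
        _ = _ := by
            rw [X_pow_eq_monomial, monomial_mul, one_mul, add_comm (Finsupp.single 1 2), map_neg,
              sub_eq_add_neg]
    obtain ⟨G, r, hr, hGr⟩ := ih (e + Finsupp.single 1 2) (by simpa [e] using hd) (-c)
    exact ⟨monomial e c + G, r, hr, by rw [hstep, hGr]; ring⟩

theorem exists_relation_mul_add (F : MvPolynomial (Fin 3) R) :
    ∃ G, ∃ r ∈ restrictSupport R reducedExponents, F = relation R * G + r := by
  induction F using MvPolynomial.induction_on' with
  | monomial d c => exact exists_relation_mul_add_monomial (d 0) d le_rfl c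
  | add F₁ F₂ ih₁ ih₂ =>
    obtain ⟨G₁, r₁, hr₁, rfl⟩ := ih₁
    obtain ⟨G₂, r₂, hr₂, rfl⟩ := ih₂
    exact ⟨G₁ + G₂, r₁ + r₂, add_mem hr₁ hr₂, by ring⟩

def weight (d : Fin 3 →₀ ℕ) : Fin 2 →₀ ℕ :=
  Finsupp.single 0 (d 0 + 2 * d 1 + 3 * d 2) + Finsupp.single 1 (d 1 + 2 * d 2)

theorem weight_injOn : Set.InjOn weight reducedExponents := by
  intro d hd d' hd' h
  have h0 : d 0 + 2 * d 1 + 3 * d 2 = d' 0 + 2 * d' 1 + 3 * d' 2 := by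
    simpa [weight] using congrArg (· 0) h
  have h1 : d 1 + 2 * d 2 = d' 1 + 2 * d' 2 := by simpa [weight] using congrArg (· 1) h
  rcases hd with hd | hd <;> rcases hd' with hd' | hd' <;>
    (ext i; fin_cases i <;> simp <;> omega)

variable (R) in
def gensAtZero : MvPolynomial (Fin 3) R →ₐ[R] MvPolynomial (Fin 2) R :=
  aeval ![X 0, X 0 ^ 2 * X 1, -(X 0 ^ 3 * X 1 ^ 2)]

theorem gensAtZero_relation : gensAtZero R (relation R) = 0 := by
  simp only [gensAtZero, relation, map_add, map_mul, map_pow, aeval_X, Matrix.cons_val]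
  ring

theorem gensAtZero_monomial (d : Fin 3 →₀ ℕ) (c : R) :
    gensAtZero R (monomial d c) = monomial (weight d) ((-1) ^ d 2 * c) := by
  rw [gensAtZero, aeval_monomial, Finsupp.prod_fintype _ _ (fun i => pow_zero _), monomial_eq,
    Finsupp.prod_fintype _ _ (fun i => pow_zero _)]
  simp only [Fin.prod_univ_three, Fin.prod_univ_two, weight, Finsupp.coe_add, Pi.add_apply,
    Finsupp.single_apply, Fin.reduceEq, ↓reduceIte, Matrix.cons_val, algebraMap_eq, C_mul, C_pow,
    C_neg, C_1, add_zero, zero_add]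
  ring

theorem coeff_weight_gensAtZero {r : MvPolynomial (Fin 3) R}
    (hr : r ∈ restrictSupport R reducedExponents) {d : Fin 3 →₀ ℕ}
    (hd : d ∈ reducedExponents) :
    coeff (weight d) (gensAtZero R r) = (-1) ^ d 2 * coeff d r := by
  conv_lhs => rw [← support_sum_monomial_coeff r]
  rw [map_sum, coeff_sum, Finset.sum_eq_single d]
  · rw [gensAtZero_monomial, coeff_monomial, if_pos rfl]
  · intro d' hd' hne
    rw [gensAtZero_monomial, coeff_monomial, if_neg (mt (weight_injOn (hr hd') hd) hne)]
  · intro hd'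
    rw [notMem_support_iff.mp hd', map_zero, map_zero, coeff_zero]

theorem eq_zero_of_gensAtZero_eq_zero {r : MvPolynomial (Fin 3) R}
    (hr : r ∈ restrictSupport R reducedExponents) (h : gensAtZero R r = 0) : r = 0 := by
  ext d
  by_cases hd : d ∈ r.support
  · have := coeff_weight_gensAtZero hr (hr hd)
    rwa [h, coeff_zero, eq_comm, (isUnit_neg_one.pow _).mul_right_eq_zero] at this
  · exact notMem_support_iff.mp hd

theorem relation_dvd_of_gensAtZero_eq_zero {F : MvPolynomial (Fin 3) R}
    (h : gensAtZero R F = 0) : relation R ∣ F := by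
  obtain ⟨G, r, hr, rfl⟩ := exists_relation_mul_add F
  have : r = 0 := eq_zero_of_gensAtZero_eq_zero hr (by simpa [gensAtZero_relation] using h)
  exact ⟨G, by rw [this, add_zero]⟩

variable (R)

def p : MvPolynomial (Fin 4) R := X 1 * X 3 + X 2 ^ 2

def v : MvPolynomial (Fin 4) R := X 0 * X 2 + X 1 * p R

def w : MvPolynomial (Fin 4) R := X 0 ^ 2 * X 3 - 2 * X 0 * X 2 * p R - X 1 * p R ^ 2

def yvw : Subalgebra R (MvPolynomial (Fin 4) R) := Algebra.adjoin R {X 1, v R, w R}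

theorem X_one_mul_w_add_v_sq : X 1 * w R + v R ^ 2 = X 0 ^ 2 * p R := by
  simp only [v, w, p]; ring

theorem yvw_eq_range : yvw R = (aeval ![X 1, v R, w R]).range := by
  rw [yvw, ← Algebra.adjoin_range_eq_range_aeval, Matrix.range_cons,
    Matrix.range_cons_cons_empty, Set.singleton_union]

theorem aeval_relation : aeval ![X 1, v R, w R] (relation R) = X 1 * w R + v R ^ 2 := by
  simp [relation]

def setXZZero : MvPolynomial (Fin 4) R →ₐ[R] MvPolynomial (Fin 2) R := aeval ![0, X 0, 0, X 1]

theorem setXZZero_comp_aeval : (setXZZero R).comp (aeval ![X 1, v R, w R]) = gensAtZero R := by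
  refine algHom_ext fun i => ?_
  fin_cases i <;>
    simp only [Fin.zero_eta, Fin.mk_one, Fin.reduceFinMk, AlgHom.comp_apply, aeval_X, setXZZero,
      gensAtZero, v, w, p, map_add, map_sub, map_mul, map_pow, map_ofNat, Matrix.cons_val] <;>
    ring

variable {R}

theorem exists_eq_mul_of_mem_span_X_zero {f : MvPolynomial (Fin 4) R} (hf : f ∈ yvw R)
    (hx : f ∈ Ideal.span {X 0}) : ∃ g ∈ yvw R, f = (X 1 * w R + v R ^ 2) * g := by
  rw [yvw_eq_range] at hf ⊢
  obtain ⟨F, rfl⟩ := (AlgHom.mem_range _).mp hf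
  obtain ⟨h, hh⟩ := Ideal.mem_span_singleton.mp hx
  have hF : gensAtZero R F = 0 := by
    rw [← setXZZero_comp_aeval, AlgHom.comp_apply, hh, map_mul]
    simp [setXZZero]
  obtain ⟨G, rfl⟩ := relation_dvd_of_gensAtZero_eq_zero hF
  exact ⟨aeval _ G, ⟨G, rfl⟩, by rw [map_mul, aeval_relation]⟩

end YVW

end

/-- In ℂ[x][y,z,u] ≅ ℂ[x,y,z,u], with p = yu+z², v = xz+yp, w = x²u−2xzp−yp²:
ℂ[y,v,w] ∩ (x) = ℂ[y,v,w] ∩ (x²) = (yw+v²)·ℂ[y,v,w]. -/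
theorem stmt8 :
    let x : MvPolynomial (Fin 4) ℂ := X 0
    let y : MvPolynomial (Fin 4) ℂ := X 1
    let z : MvPolynomial (Fin 4) ℂ := X 2
    let u : MvPolynomial (Fin 4) ℂ := X 3
    let p := y * u + z ^ 2
    let v := x * z + y * p
    let w := x ^ 2 * u - 2 * x * z * p - y * p ^ 2
    let A := Algebra.adjoin ℂ ({y, v, w} : Set (MvPolynomial (Fin 4) ℂ))
    ({f | f ∈ A ∧ f ∈ Ideal.span ({x} : Set (MvPolynomial (Fin 4) ℂ))} =
        {f | f ∈ A ∧ f ∈ Ideal.span ({x ^ 2} : Set (MvPolynomial (Fin 4) ℂ))}) ∧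
      {f | f ∈ A ∧ f ∈ Ideal.span ({x} : Set (MvPolynomial (Fin 4) ℂ))} =
        {f | ∃ g ∈ A, f = (y * w + v ^ 2) * g} := by
  intro x y z u p v w A
  have key : ∀ f ∈ A, f ∈ Ideal.span {x} → ∃ g ∈ A, f = (y * w + v ^ 2) * g :=
    fun _ => YVW.exists_eq_mul_of_mem_span_X_zero
  have hrel : y * w + v ^ 2 = x ^ 2 * p := YVW.X_one_mul_w_add_v_sq ℂ
  have hmem : y * w + v ^ 2 ∈ A :=
    add_mem (mul_mem (Algebra.subset_adjoin (by simp)) (Algebra.subset_adjoin (by simp)))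
      (pow_mem (Algebra.subset_adjoin (by simp)) 2)
  refine ⟨Set.ext fun f => and_congr_right fun hf => ⟨fun hx => ?_, fun hx => ?_⟩,
    Set.ext fun f => ⟨fun ⟨hf, hx⟩ => key f hf hx, ?_⟩⟩
  · obtain ⟨g, -, rfl⟩ := key f hf hx
    exact Ideal.mem_span_singleton.mpr ⟨p * g, by rw [hrel]; ring⟩
  · exact Ideal.span_singleton_le_span_singleton.mpr (dvd_pow_self x two_ne_zero) hx
  · rintro ⟨g, hg, rfl⟩
    exact ⟨mul_mem hmem hg, Ideal.mem_span_singleton.mpr ⟨x * p * g, by rw [hrel]; ring⟩⟩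
end

section
/- For every m ≥ 3, the polynomial g_m = y + x^m·w, where w = x²u − 2xz(yu+z²) − y(yu+z²)², is a ℂ[x]-coordinate of ℂ[x][y,z,u]. -/
open MvPolynomial

/-! `g_m` is the first component of `exp (x^(m-3) D)`, where `D` is a locally nilpotent
`ℂ[x]`-derivation with `D y = x³w`. Being an exponential, this map is an automorphism with
inverse `exp (-x^(m-3) D)`, so its three components together with `x` generate everything. -/

namespace Venereau

section Flow

variable {R : Type*} [CommRing R]

def pPoly (v : R × R × R) : R := v.1 * v.2.2 + v.2.1 ^ 2

def wPoly (x : R) (v : R × R × R) : R :=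
  x ^ 2 * v.2.2 - 2 * x * v.2.1 * pPoly v - v.1 * pPoly v ^ 2

/-- `flow x t = exp (t D)` for the locally nilpotent derivation
`D = x³w ∂_y − (yw² + x²pw) ∂_z + (2zw² − xp²w) ∂_u`, which kills `x` and `w` and sends `p`
to `xw²`. -/
def flow (x t : R) (v : R × R × R) : R × R × R :=
  (v.1 + t * x ^ 3 * wPoly x v,
   v.2.1 - t * (v.1 * wPoly x v ^ 2 + x ^ 2 * pPoly v * wPoly x v)
     - t ^ 2 * x ^ 3 * wPoly x v ^ 3,
   v.2.2 + t * (2 * v.2.1 * wPoly x v ^ 2 - x * pPoly v ^ 2 * wPoly x v)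
     - t ^ 2 * (v.1 * wPoly x v ^ 4 + 2 * x ^ 2 * pPoly v * wPoly x v ^ 3)
     - t ^ 3 * x ^ 3 * wPoly x v ^ 5)

theorem pPoly_flow (x t : R) (v : R × R × R) :
    pPoly (flow x t v) = pPoly v + t * x * wPoly x v ^ 2 := by
  simp only [flow, wPoly, pPoly]
  ring

theorem wPoly_flow (x t : R) (v : R × R × R) : wPoly x (flow x t v) = wPoly x v := by
  simp only [flow, wPoly, pPoly]
  ring

theorem flow_neg_flow (x t : R) (v : R × R × R) : flow x (-t) (flow x t v) = v := by
  conv_lhs => rw [flow, wPoly_flow, pPoly_flow]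
  simp only [flow]
  ext <;> ring

theorem flow_mem {S : Type*} [SetLike S R] [SubringClass S R] {s : S} {x t : R}
    {v : R × R × R} (hx : x ∈ s) (ht : t ∈ s) (h₁ : v.1 ∈ s) (h₂ : v.2.1 ∈ s)
    (h₃ : v.2.2 ∈ s) :
    (flow x t v).1 ∈ s ∧ (flow x t v).2.1 ∈ s ∧ (flow x t v).2.2 ∈ s := by
  simp only [flow, wPoly, pPoly]
  refine ⟨?_, ?_, ?_⟩ <;> aesop

end Flow

theorem adjoin_flow_eq_top {k : Type*} [CommRing k] {t : MvPolynomial (Fin 4) k}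
    (ht : t ∈ Algebra.adjoin k {X 0}) :
    let v := flow (X 0) t (X 1, X 2, X 3)
    Algebra.adjoin k {X 0, v.1, v.2.1, v.2.2} = ⊤ := by
  intro v
  set A := Algebra.adjoin k {X 0, v.1, v.2.1, v.2.2}
  have hx : X 0 ∈ A := Algebra.subset_adjoin (by simp)
  have ht : t ∈ A := Algebra.adjoin_le (by simpa using hx) ht
  have hX := flow_mem (s := A) (v := v) hx (neg_mem ht)
    (Algebra.subset_adjoin (by simp)) (Algebra.subset_adjoin (by simp))
    (Algebra.subset_adjoin (by simp))
  rw [flow_neg_flow] at hX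
  rw [eq_top_iff, ← adjoin_range_X, Algebra.adjoin_le_iff]
  rintro _ ⟨i, rfl⟩
  fin_cases i
  exacts [hx, hX.1, hX.2.1, hX.2.2]

end Venereau

/-- For every m ≥ 3, g_m = y + x^m·w, with w = x²u − 2xz(yu+z²) − y(yu+z²)²,
is a ℂ[x]-coordinate of ℂ[x][y,z,u] ≅ ℂ[x,y,z,u]. -/
theorem stmt12 :
    let x : MvPolynomial (Fin 4) ℂ := X 0
    let y : MvPolynomial (Fin 4) ℂ := X 1
    let z : MvPolynomial (Fin 4) ℂ := X 2
    let u : MvPolynomial (Fin 4) ℂ := X 3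
    let p := y * u + z ^ 2
    let w := x ^ 2 * u - 2 * x * z * p - y * p ^ 2
    ∀ m : ℕ, 3 ≤ m →
      ∃ g h : MvPolynomial (Fin 4) ℂ,
        Algebra.adjoin ℂ ({x, y + x ^ m * w, g, h} : Set (MvPolynomial (Fin 4) ℂ)) = ⊤ := by
  intro x y z u p w m hm
  have hT : x ^ (m - 3) ∈ Algebra.adjoin ℂ {x} :=
    pow_mem (Algebra.self_mem_adjoin_singleton ℂ x) _
  have hg : y + x ^ m * w = (Venereau.flow x (x ^ (m - 3)) (y, z, u)).1 := by
    rw [Venereau.flow, ← pow_sub_mul_pow x hm]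
    simp only [Venereau.wPoly, Venereau.pPoly]
    ring
  rw [hg]
  exact ⟨_, _, Venereau.adjoin_flow_eq_top hT⟩
end

section
/- Every Vénéreau-type polynomial f = y + xQ, Q ∈ ℂ[x][v,w], is a coordinate of S[y,z,u] for S = ℂ[x,x⁻¹], and its image modulo x is y, a coordinate of ℂ[y,z,u]. -/
open MvPolynomial LaurentPolynomial

/-! Since `v ^ 2 + y * w = x ^ 2 * p`, once `x` is inverted the subalgebra generated by `y`, `v`
and `w` contains `p`, then `z = x⁻¹ (v - y p)` and `u = x⁻² (w + 2 x z p + y p²)`. Over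
`S = ℂ[x, x⁻¹]` the variable `y` is recovered from `f` as `f - x Q`, because `Q` is a polynomial in
`x`, `v`, `w`. Modulo `x`, `f` reduces to `y`. -/

theorem MvPolynomial.eq_top_of_forall_X_mem {σ R : Type*} [CommSemiring R]
    {B : Subalgebra R (MvPolynomial σ R)} (h : ∀ i, X i ∈ B) : B = ⊤ :=
  eq_top_iff.2 <| adjoin_range_X (R := R) ▸ Algebra.adjoin_le (Set.range_subset_iff.2 h)

section Venereau

variable {A : Type*} [CommRing A] (x y z u : A)

theorem venereau_sq_add_mul :
    (x * z + y * (y * u + z ^ 2)) ^ 2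
      + y * (x ^ 2 * u - 2 * x * z * (y * u + z ^ 2) - y * (y * u + z ^ 2) ^ 2)
      = x ^ 2 * (y * u + z ^ 2) := by
  ring

variable {R : Type*} [CommRing R] [Algebra R A] {B : Subalgebra R A} {x y z u}

theorem venereau_mem_of_mem {x' : A} (hxx' : x * x' = 1) (hx : x ∈ B) (hx' : x' ∈ B)
    (hy : y ∈ B) (hv : x * z + y * (y * u + z ^ 2) ∈ B)
    (hw : x ^ 2 * u - 2 * x * z * (y * u + z ^ 2) - y * (y * u + z ^ 2) ^ 2 ∈ B) :
    z ∈ B ∧ u ∈ B := by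
  set p := y * u + z ^ 2
  set v := x * z + y * p
  set w := x ^ 2 * u - 2 * x * z * p - y * p ^ 2
  have hp : p ∈ B := by
    have hp_eq : p = x' ^ 2 * (v ^ 2 + y * w) := by
      linear_combination (-(p * (x * x' + 1))) * hxx' - x' ^ 2 * venereau_sq_add_mul x y z u
    rw [hp_eq]
    exact B.mul_mem (B.pow_mem hx' 2) (B.add_mem (B.pow_mem hv 2) (B.mul_mem hy hw))
  have hz : z ∈ B := by
    have hz_eq : z = x' * (v - y * p) := by linear_combination (-z) * hxx'
    rw [hz_eq]
    exact B.mul_mem hx' (sub_mem hv (B.mul_mem hy hp))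
  refine ⟨hz, ?_⟩
  have hu_eq : u = x' ^ 2 * (w + 2 * x * z * p + y * p ^ 2) := by
    linear_combination (-(u * (x * x' + 1))) * hxx'
  rw [hu_eq]
  exact B.mul_mem (B.pow_mem hx' 2) <| B.add_mem (B.add_mem hw
    (B.mul_mem (B.mul_mem (B.mul_mem (B.natCast_mem 2) hx) hz) hp)) (B.mul_mem hy (B.pow_mem hp 2))

end Venereau

/-- Every Vénéreau-type polynomial f = y + xQ, Q ∈ ℂ[x][v,w], becomes a
coordinate of S[y,z,u] for S = ℂ[x,x⁻¹] (via the inclusion ι : ℂ[x,y,z,u] →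
S[y,z,u], x ↦ T 1), and its image modulo x (under π : x ↦ 0) is y, a
coordinate of ℂ[y,z,u]. -/
theorem stmt15 :
    let x : MvPolynomial (Fin 4) ℂ := X 0
    let y : MvPolynomial (Fin 4) ℂ := X 1
    let z : MvPolynomial (Fin 4) ℂ := X 2
    let u : MvPolynomial (Fin 4) ℂ := X 3
    let p := y * u + z ^ 2
    let v := x * z + y * p
    let w := x ^ 2 * u - 2 * x * z * p - y * p ^ 2
    let S := LaurentPolynomial ℂ
    let ι : MvPolynomial (Fin 4) ℂ →ₐ[ℂ] MvPolynomial (Fin 3) S :=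
      aeval ![MvPolynomial.C (T 1), X 0, X 1, X 2]
    let π : MvPolynomial (Fin 4) ℂ →ₐ[ℂ] MvPolynomial (Fin 3) ℂ :=
      aeval ![0, X 0, X 1, X 2]
    ∀ Q ∈ Algebra.adjoin ℂ ({x, v, w} : Set (MvPolynomial (Fin 4) ℂ)),
      (∃ g h : MvPolynomial (Fin 3) S,
        Algebra.adjoin S ({ι (y + x * Q), g, h} : Set (MvPolynomial (Fin 3) S)) = ⊤) ∧
      π (y + x * Q) = X 0 ∧
      (∃ g h : MvPolynomial (Fin 3) ℂ,
        Algebra.adjoin ℂ ({π (y + x * Q), g, h} : Set (MvPolynomial (Fin 3) ℂ)) = ⊤) := by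
  intro x y z u p v w S ι π Q hQ
  have hπ : π (y + x * Q) = X 0 := by simp [π, x, y]
  refine ⟨⟨ι v, ι w, eq_top_of_forall_X_mem fun i => ?_⟩, hπ, X 1, X 2, ?_⟩
  swap
  · rw [hπ]
    exact eq_top_of_forall_X_mem fun i => by fin_cases i <;> exact Algebra.subset_adjoin (by simp)
  set B := Algebra.adjoin S {ι (y + x * Q), ι v, ι w}
  have hC (s : S) : MvPolynomial.C s ∈ B := B.algebraMap_mem s
  have hv : ι v ∈ B := Algebra.subset_adjoin (by simp)
  have hw : ι w ∈ B := Algebra.subset_adjoin (by simp)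
  have hιx : ι x = MvPolynomial.C (T 1) := by simp [ι, x]
  have hx : ι x ∈ B := hιx ▸ hC _
  have hQB : ι Q ∈ B := by
    have hgen : {x, v, w} ⊆ ((B.restrictScalars ℂ).comap ι : Set _) := by
      simp only [Set.insert_subset_iff, Set.singleton_subset_iff, SetLike.mem_coe,
        Subalgebra.mem_comap, Subalgebra.mem_restrictScalars]
      exact ⟨hx, hv, hw⟩
    exact Algebra.adjoin_le hgen hQ
  have hy : ι y ∈ B := by
    have hf : ι (y + x * Q) ∈ B := Algebra.subset_adjoin (by simp)
    rw [map_add, map_mul] at hf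
    simpa using sub_mem hf (B.mul_mem hx hQB)
  have hxx' : ι x * MvPolynomial.C (T (-1)) = 1 := by
    rw [hιx, ← C_mul, ← T_add, add_neg_cancel, T_zero, C_1]
  simp only [v, w, p, map_add, map_sub, map_mul, map_pow, map_ofNat] at hv hw
  obtain ⟨hz, hu⟩ := venereau_mem_of_mem hxx' hx (hC _) hy hv hw
  fin_cases i
  · simpa [ι, y] using hy
  · simpa [ι, z] using hz
  · simpa [ι, u] using hu
end

section
/- For a commutative ring A, elements a, b ∈ A, and g ∈ A[y], there is an A-algebra isomorphism A[y]/(y + a·g(y) − b) ≅ A[y]/(y + g(ay + b)). -/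
/-!
Substituting `X ↦ a X + b` sends `X + a g - b` to `a (X + g(a X + b))`, and substituting
`X ↦ -g` sends `X + g(a X + b)` into the ideal of `X + a g - b`, because modulo that ideal
`a (-g) + b ≡ X`. The two substitutions are mutually inverse modulo the respective ideals, so they
descend to inverse `A`-algebra maps between the quotients.
-/

open Polynomial

namespace Polynomial

variable {A : Type*} [CommRing A]

theorem aeval_sub_aeval_mem {I : Ideal A[X]} {u v : A[X]} (h : u - v ∈ I) (p : A[X]) :
    aeval u p - aeval v p ∈ I := by
  rw [← Ideal.Quotient.eq] at h ⊢
  simp only [← Ideal.Quotient.mkₐ_eq_mk A, ← aeval_algHom_apply] at h ⊢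
  rw [h]

noncomputable def quotientAevalHom {I J : Ideal A[X]} (s : A[X]) (hs : I ≤ J.comap (aeval s)) :
    A[X] ⧸ I →ₐ[A] A[X] ⧸ J :=
  Ideal.Quotient.liftₐ I ((Ideal.Quotient.mkₐ A J).comp (aeval s)) fun _ hp =>
    Ideal.Quotient.eq_zero_iff_mem.mpr (hs hp)

@[simp]
theorem quotientAevalHom_mk {I J : Ideal A[X]} (s : A[X]) (hs : I ≤ J.comap (aeval s))
    (p : A[X]) : quotientAevalHom s hs (Ideal.Quotient.mk I p) = Ideal.Quotient.mk J (aeval s p) :=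
  rfl

noncomputable def quotientAevalEquiv {I J : Ideal A[X]} (s t : A[X])
    (hs : I ≤ J.comap (aeval s)) (ht : J ≤ I.comap (aeval t))
    (hts : aeval t s - X ∈ I) (hst : aeval s t - X ∈ J) : (A[X] ⧸ I) ≃ₐ[A] (A[X] ⧸ J) :=
  AlgEquiv.ofAlgHom (quotientAevalHom s hs) (quotientAevalHom t ht)
    (Ideal.Quotient.algHom_ext _ <| algHom_ext <| by simpa using Ideal.Quotient.eq.mpr hst)
    (Ideal.Quotient.algHom_ext _ <| algHom_ext <| by simpa using Ideal.Quotient.eq.mpr hts)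

end Polynomial

/-- For a commutative ring A, a, b ∈ A and g ∈ A[y], there is an A-algebra
isomorphism A[y]/(y + a·g(y) − b) ≅ A[y]/(y + g(ay + b)). -/
theorem stmt16 (A : Type*) [CommRing A] (a b : A) (g : A[X]) :
    Nonempty ((A[X] ⧸ Ideal.span {X + C a * g - C b}) ≃ₐ[A]
      (A[X] ⧸ Ideal.span {X + g.comp (C a * X + C b)})) := by
  set s : A[X] := C a * X + C b
  have hts : aeval (-g) s - X ∈ Ideal.span {X + C a * g - C b} := by
    rw [Ideal.mem_span_singleton]
    exact ⟨-1, by simp only [map_add, map_mul, aeval_C, algebraMap_eq, aeval_X, s]; ring⟩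
  refine ⟨quotientAevalEquiv s (-g) ?_ ?_ hts ?_⟩
  · rw [Ideal.span_singleton_le_iff_mem, Ideal.mem_comap, Ideal.mem_span_singleton]
    refine ⟨C a, ?_⟩
    simp only [aeval_sub, map_add, aeval_X, map_mul, aeval_C, algebraMap_eq, comp_eq_aeval, s]
    ring
  · rw [Ideal.span_singleton_le_iff_mem, Ideal.mem_comap]
    convert aeval_sub_aeval_mem hts g using 1
    simp only [map_add, aeval_X, aeval_comp, aeval_X_left, AlgHom.coe_id, id_eq]
    ring
  · rw [Ideal.mem_span_singleton]
    exact ⟨-1, by simp only [aeval_neg, comp_eq_aeval, s]; ring⟩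
end
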